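/- With x_m := (e_{0m}, (0 m)) in Graphs(n+1) ⋊ S_{n+1}, for distinct i, j, k in {1,...,n}, one has (x_i x_j x_i x_k)⁴ = identity; i.e., (x_i x_j x_i x_k)² has order exactly 2. -/

import Mathlib

open Equiv Finset

abbrev Vtx (n : ℕ) := Fin (n+1)
abbrev Edge (n : ℕ) := {e : Sym2 (Vtx n) // ¬ e.IsDiag}
abbrev Graphs (n : ℕ) := Edge n → ZMod 2

/-- relabelling of edges by a permutation of vertices -/
def permEdge {n : ℕ} (σ : Perm (Vtx n)) : Edge n ≃ Edge n where
  toFun e := ⟨Sym2.map σ e.1, by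
    simpa [Sym2.isDiag_map σ.injective] using e.2⟩
  invFun e := ⟨Sym2.map σ.symm e.1, by
    simpa [Sym2.isDiag_map σ.symm.injective] using e.2⟩
  left_inv e := by
    ext1
    simp [Sym2.map_map]
  right_inv e := by
    ext1
    simp [Sym2.map_map]

/-- action of a vertex permutation on graphs -/
def gact {n : ℕ} (σ : Perm (Vtx n)) : Graphs n ≃+ Graphs n where
  toFun g := fun e => g ((permEdge σ).symm e)
  invFun g := fun e => g (permEdge σ e)
  left_inv g := by funext e; simp
  right_inv g := by funext e; simp
  map_add' g h := rfl

lemma gact_mul {n : ℕ} (σ τ : Perm (Vtx n)) (g : Graphs n) :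
    gact (σ * τ) g = gact σ (gact τ g) := by
  funext e
  simp only [gact, AddEquiv.coe_mk, Equiv.coe_fn_mk, Equiv.symm]
  congr 1
  ext1
  simp [permEdge, Sym2.map_map]
  rfl

/-- the action as a homomorphism to automorphisms, multiplicatively -/
def φn (n : ℕ) : Perm (Vtx n) →* MulAut (Multiplicative (Graphs n)) where
  toFun σ := AddEquiv.toMultiplicative (gact σ)
  map_one' := by
    ext g
    simp [gact, permEdge]
    refine congrArg (Multiplicative.toAdd g) (Subtype.ext ?_)
    first
      | exact congrFun Sym2.map_id' _
      | exact Sym2.map_id _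
      | simp [Equiv.Perm.one_symm, Equiv.Perm.coe_one]
  map_mul' σ τ := by
    ext g e
    exact congrFun (gact_mul σ τ g.toAdd) e

/-- the ambient group `Graphs(n+1) ⋊ S_{n+1}` -/
abbrev DG (n : ℕ) := SemidirectProduct (Multiplicative (Graphs n)) (Perm (Vtx n)) (φn n)

/-- the single-edge graph with edge `{u,v}` -/
def single {n : ℕ} (u v : Vtx n) : Graphs n :=
  fun e => if e.1 = s(u, v) then 1 else 0

/-- the generator `x_m = (e_{0m}, (0 m))` -/
def xgen {n : ℕ} (m : Vtx n) : DG n :=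
  ⟨Multiplicative.ofAdd (single 0 m), Equiv.swap 0 m⟩

/-- the degree of a vertex in a graph -/
def deg {n : ℕ} (g : Graphs n) (v : Vtx n) : ℕ :=
  (Finset.univ.filter (fun e : Edge n => v ∈ e.1 ∧ g e = 1)).card

/-- the number of edges of a graph -/
def nedges {n : ℕ} (g : Graphs n) : ℕ :=
  (Finset.univ.filter (fun e : Edge n => g e = 1)).card

/-- all degrees even and an even number of edges -/
def evenGraph {n : ℕ} (g : Graphs n) : Prop :=
  (∀ v : Vtx n, Even (deg g v)) ∧ Even (nedges g)

/-- the subgroup generated by the `x_m`, `m = 1, …, n` -/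
def Dn (n : ℕ) : Subgroup (DG n) :=
  Subgroup.closure {x | ∃ m : Vtx n, m ≠ 0 ∧ x = xgen m}

/-- the complete graph -/
def complete (n : ℕ) : Graphs n := fun _ => 1

/-! The permutation part of `w = x_i x_j x_i x_k` is the involution `(i j)(0 k)`, so `w²` is a pure
graph, namely the 4-cycle `0 – i – k – j – 0`. It is nonzero, and every graph has additive order
at most 2. -/

namespace DG

variable {n : ℕ}

lemma gact_single (σ : Perm (Vtx n)) (u v : Vtx n) :
    gact σ (single u v) = single (σ u) (σ v) := by
  funext e
  show (if Sym2.map σ.symm e.1 = s(u, v) then (1 : ZMod 2) else 0) =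
    if e.1 = s(σ u, σ v) then 1 else 0
  congr 1
  rw [eq_iff_iff, ← (Sym2.map.injective σ.injective).eq_iff, Sym2.map_map]
  simp

lemma gact_one (g : Graphs n) : gact 1 g = g :=
  congrArg Multiplicative.toAdd (DFunLike.congr_fun (map_one (φn n)) (.ofAdd g))

lemma single_comm (u v : Vtx n) : single u v = single v u := by
  funext e
  simp only [single, Sym2.eq_swap]

lemma graphs_two_eq_zero : (2 : Graphs n) = 0 := by
  funext e
  rfl

def cycle4 (a b c d : Vtx n) : Graphs n :=
  single a b + single b c + single c d + single d a

lemma cycle4_ne_zero {a b c d : Vtx n} (hab : a ≠ b) (hac : a ≠ c) (had : a ≠ d) (hbc : b ≠ c)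
    (hbd : b ≠ d) : cycle4 a b c d ≠ 0 := by
  intro h
  have := congrFun h ⟨s(a, b), by simpa using hab⟩
  simp [cycle4, single, hab, hac, had, hbc, hbd] at this

lemma mk_mul_mk (a b : Graphs n) (σ τ : Perm (Vtx n)) :
    (⟨.ofAdd a, σ⟩ : DG n) * ⟨.ofAdd b, τ⟩ = ⟨.ofAdd (a + gact σ b), σ * τ⟩ := rfl

lemma mk_sq (a : Graphs n) (σ : Perm (Vtx n)) :
    (⟨.ofAdd a, σ⟩ : DG n) ^ 2 = ⟨.ofAdd (a + gact σ a), σ ^ 2⟩ := by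
  rw [sq, mk_mul_mk, sq]

lemma orderOf_mk_one {a : Graphs n} (ha : a ≠ 0) : orderOf (⟨.ofAdd a, 1⟩ : DG n) = 2 := by
  refine orderOf_eq_prime ?_ ?_
  · rw [mk_sq, one_pow, gact_one, ← two_mul, graphs_two_eq_zero, zero_mul]
    rfl
  · intro h
    exact ha (congrArg (fun g : DG n => g.left.toAdd) h)

lemma xgen_mul_xgen_mul_xgen_mul_xgen {i j k : Vtx n} (hi : i ≠ 0) (hj : j ≠ 0)
    (hij : i ≠ j) (hik : i ≠ k) (hjk : j ≠ k) :
    xgen i * xgen j * xgen i * xgen k =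
      ⟨.ofAdd (single 0 i + single i j + single 0 j + single 0 k), swap i j * swap 0 k⟩ := by
  have hs : swap 0 i * swap 0 j * swap 0 i = swap i j := by
    rw [swap_comm 0 j, swap_mul_swap_mul_swap hj hij.symm]
  simp only [xgen, mk_mul_mk, hs, gact_single, Perm.mul_apply, swap_apply_left, swap_apply_right,
    swap_apply_of_ne_of_ne hi hij, swap_apply_of_ne_of_ne hj hij.symm,
    swap_apply_of_ne_of_ne hik.symm hjk.symm, swap_apply_of_ne_of_ne hi.symm hj.symm]
  rw [single_comm j 0]

lemma sq_xgen_mul_xgen_mul_xgen_mul_xgen {i j k : Vtx n} (hi : i ≠ 0) (hj : j ≠ 0) (hk : k ≠ 0)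
    (hij : i ≠ j) (hik : i ≠ k) (hjk : j ≠ k) :
    (xgen i * xgen j * xgen i * xgen k) ^ 2 =
      ⟨.ofAdd (cycle4 0 i k j), 1⟩ := by
  have hcomm : Commute (swap i j) (swap 0 k) :=
    (Perm.disjoint_swap_swap (by simp [hi, hj, hk.symm, hij, hik, hjk])).commute
  rw [xgen_mul_xgen_mul_xgen_mul_xgen hi hj hij hik hjk, mk_sq, hcomm.mul_pow, sq, sq,
    swap_mul_self, swap_mul_self, one_mul]
  simp only [map_add, gact_single, Perm.mul_apply, swap_apply_left, swap_apply_right,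
    swap_apply_of_ne_of_ne hi hik, swap_apply_of_ne_of_ne hj hjk,
    swap_apply_of_ne_of_ne hik.symm hjk.symm, swap_apply_of_ne_of_ne hi.symm hj.symm]
  congr 2
  rw [cycle4, single_comm j i, single_comm k i, single_comm k 0, single_comm j 0]
  linear_combination (single i j + single 0 k) * graphs_two_eq_zero

end DG

/-- For distinct `i, j, k ∈ {1,…,n}`, in `Graphs(n+1) ⋊ S_{n+1}` one has
`(x_i x_j x_i x_k)⁴ = 1`, and `(x_i x_j x_i x_k)²` has order exactly 2. -/
theorem stmt6 (n : ℕ) (i j k : Vtx n)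
    (hi : i ≠ 0) (hj : j ≠ 0) (hk : k ≠ 0)
    (hij : i ≠ j) (hik : i ≠ k) (hjk : j ≠ k) :
    (xgen i * xgen j * xgen i * xgen k) ^ 4 = 1 ∧
    orderOf ((xgen i * xgen j * xgen i * xgen k) ^ 2) = 2 := by
  have hord : orderOf ((xgen i * xgen j * xgen i * xgen k) ^ 2) = 2 := by
    rw [DG.sq_xgen_mul_xgen_mul_xgen_mul_xgen hi hj hk hij hik hjk]
    exact DG.orderOf_mk_one (DG.cycle4_ne_zero hi.symm hk.symm hj.symm hik hij)
  refine ⟨?_, hord⟩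
  have h := pow_orderOf_eq_one ((xgen i * xgen j * xgen i * xgen k) ^ 2)
  rwa [hord, ← pow_mul] at h
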